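/- arXiv:0804.2230 — 4 statements merged into one kernel-verified Lean document; each statement's English description precedes it below -/
import Mathlib

section
/- Let ρ > 0 and α ∈ [0, 2π), and suppose R, r ≥ 0 satisfy R + r = ρα and R = 2ρ sin(α/2). Then the circular-segment area A = (ρ²/2)(α − sin α) satisfies A ≤ (π/(3√2)) · r^{1/2} · (R + r)^{3/2}. -/
/-!
The chord deficit `r = ρα - 2ρ sin (α/2)` controls `α`: integrating
`cos t ≤ 1 - 2t²/π²` on `[0, π]` gives `t - sin t ≥ 2t³/(3π²)`, hence `ρα³ ≤ 6π² r`.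
On the other hand `α - sin α ≤ α³/6` gives `A ≤ ρ²α³/12`, so
`A² ≤ (ρα³) · (ρα)³ / 144 ≤ (π²/24) · r · (R + r)³`, which is stronger than the claim.
-/

open Real

lemma sin_le_sub_mul_cube {x : ℝ} (hx₀ : 0 ≤ x) (hx : x ≤ π) :
    sin x ≤ x - 2 / (3 * π ^ 2) * x ^ 3 := by
  let f (t : ℝ) : ℝ := t - 2 / (3 * π ^ 2) * t ^ 3 - sin t
  have hderiv (t : ℝ) : deriv f t = 1 - 2 / π ^ 2 * t ^ 2 - cos t := by
    simp (disch := fun_prop) [f]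
    ring
  have hmono : MonotoneOn f (Set.Icc 0 π) := by
    apply monotoneOn_of_deriv_nonneg (convex_Icc 0 π) (by fun_prop) (by fun_prop)
    intro t ht
    rw [interior_Icc] at ht
    have := cos_le_one_sub_mul_cos_sq (abs_le.2 ⟨by linarith [ht.1], ht.2.le⟩)
    linarith [hderiv t]
  have := hmono ⟨le_rfl, pi_pos.le⟩ ⟨hx₀, hx⟩ hx₀
  simpa [f] using this

lemma mul_cube_le_of_chord {ρ α R r : ℝ} (hρ : 0 ≤ ρ) (hα₀ : 0 ≤ α) (hα₁ : α ≤ 2 * π)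
    (hlen : R + r = ρ * α) (hchord : R = 2 * ρ * sin (α / 2)) :
    ρ * α ^ 3 ≤ 6 * π ^ 2 * r := by
  have hsin := sin_le_sub_mul_cube (x := α / 2) (by positivity) (by linarith)
  have hr : ρ * α ^ 3 / (6 * π ^ 2) ≤ r := by
    have hdeficit : r = 2 * ρ * (α / 2 - sin (α / 2)) := by linarith
    calc ρ * α ^ 3 / (6 * π ^ 2) = 2 * ρ * (2 / (3 * π ^ 2) * (α / 2) ^ 3) := by ring
      _ ≤ r := by rw [hdeficit]; gcongr; linarith
  rw [div_le_iff₀ (by positivity)] at hr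
  linarith

lemma le_mul_sqrt_mul_rpow_of_sq_le {A r L : ℝ} (hr : 0 ≤ r) (hL : 0 ≤ L)
    (h : A ^ 2 ≤ π ^ 2 / 18 * r * L ^ 3) :
    A ≤ π / (3 * √2) * √r * L ^ ((3 : ℝ) / 2) := by
  have hcoef : π / (3 * √2) = √(π ^ 2 / 18) := by
    rw [sqrt_div' _ (by norm_num), sqrt_sq pi_pos.le,
      show (18 : ℝ) = 3 ^ 2 * 2 by norm_num, sqrt_mul' _ (by norm_num), sqrt_sq (by norm_num)]
  have hpow : L ^ ((3 : ℝ) / 2) = √(L ^ 3) := by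
    rw [sqrt_eq_rpow, ← rpow_natCast_mul hL]
    norm_num
  rw [hcoef, hpow, ← sqrt_mul (by positivity), ← sqrt_mul (by positivity)]
  exact le_sqrt_of_sq_le h

theorem circular_segment_area_bound_general (ρ α R r A : ℝ)
    (hρ : 0 < ρ) (hα₀ : 0 ≤ α) (hα₁ : α < 2 * Real.pi)
    (hr : 0 ≤ r)
    (hlen : R + r = ρ * α)
    (hchord : R = 2 * ρ * Real.sin (α / 2))
    (hA : A = ρ ^ 2 / 2 * (α - Real.sin α)) :
    A ≤ Real.pi / (3 * Real.sqrt 2) * Real.sqrt r * (R + r) ^ ((3 : ℝ) / 2) := by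
  have hA₀ : 0 ≤ A := hA ▸ mul_nonneg (by positivity) (sub_nonneg.2 (sin_le hα₀))
  have hA₁ : A ≤ ρ ^ 2 * α ^ 3 / 12 := by
    rw [hA]
    nlinarith [sin_ge_sub_cube hα₀, sq_nonneg ρ]
  have hcube := mul_cube_le_of_chord hρ.le hα₀ hα₁.le hlen hchord
  rw [hlen]
  apply le_mul_sqrt_mul_rpow_of_sq_le hr (by positivity)
  calc A ^ 2 ≤ (ρ ^ 2 * α ^ 3 / 12) ^ 2 := pow_le_pow_left₀ hA₀ hA₁ 2
    _ = ρ * α ^ 3 * (ρ * α) ^ 3 / 144 := by ring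
    _ ≤ 6 * π ^ 2 * r * (ρ * α) ^ 3 / 144 := by gcongr
    _ ≤ π ^ 2 / 18 * r * (ρ * α) ^ 3 := by
      have : 0 ≤ π ^ 2 * r * (ρ * α) ^ 3 := by positivity
      linarith

/-- Isoperimetric estimate for a circular segment: if `ρ > 0`, `α ∈ [0, 2π)`,
`R, r ≥ 0` satisfy `R + r = ρ α` and `R = 2 ρ sin (α/2)`, then the area
`A = (ρ²/2)(α − sin α)` satisfies `A ≤ (π/(3√2)) · √r · (R+r)^{3/2}`. -/
theorem circular_segment_area_bound (ρ α R r A : ℝ)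
    (hρ : 0 < ρ) (hα₀ : 0 ≤ α) (hα₁ : α < 2 * Real.pi)
    (hR : 0 ≤ R) (hr : 0 ≤ r)
    (hlen : R + r = ρ * α)
    (hchord : R = 2 * ρ * Real.sin (α / 2))
    (hA : A = ρ ^ 2 / 2 * (α - Real.sin α)) :
    A ≤ Real.pi / (3 * Real.sqrt 2) * Real.sqrt r * (R + r) ^ ((3 : ℝ) / 2) :=
  circular_segment_area_bound_general ρ α R r A hρ hα₀ hα₁ hr hlen hchord hA
end

section
/- Let f and (f_n)_{n≥1} be measurable functions from [0,1] to the unit sphere of ℝ^N. If the primitives of f_n converge uniformly to the primitive of f, i.e. sup_{t∈[0,1]} ‖∫₀ᵗ f_n(s) ds − ∫₀ᵗ f(s) ds‖ → 0, then f_n converges to f in L¹: ∫₀¹ ‖f_n(t) − f(t)‖ dt → 0. -/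
/-!
For unit vectors `‖x - y‖ ^ 2 = -2 ⟪y, x - y⟫`, so `∫₀¹ ‖fₙ - f‖ ^ 2 = -2 ∫₀¹ ⟪f, fₙ - f⟫`, and by
Cauchy–Schwarz on `[0, 1]` it suffices that `∫₀¹ ⟪f, uₙ⟫ → 0` for `uₙ = fₙ - f`. This is weak
convergence of the bounded sequence `uₙ`, whose primitives tend to `0`: against a constant vector
on a subinterval the integral is a difference of primitives, uniform continuity passes to
continuous test functions, and density of continuous functions in `L¹` passes to `f`.
-/

open MeasureTheory Filter intervalIntegral Set Topology
open scoped InnerProductSpace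

theorem tendsto_zero_of_forall_eventually_norm_sub_le {ι E : Type*} [SeminormedAddCommGroup E]
    {l : Filter ι} {x : ι → E} (C : ℝ)
    (h : ∀ η > 0, ∃ v : ι → E, Tendsto v l (𝓝 0) ∧ ∀ᶠ i in l, ‖x i - v i‖ ≤ C * η) :
    Tendsto x l (𝓝 0) := by
  rw [Metric.tendsto_nhds]
  intro ε hε
  obtain ⟨v, hv, hxv⟩ := h (ε / (2 * (|C| + 1))) (by positivity)
  have hCη : C * (ε / (2 * (|C| + 1))) < ε / 2 := by
    rw [← mul_div_assoc, div_lt_div_iff₀ (by positivity) two_pos]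
    nlinarith [le_abs_self C, abs_nonneg C]
  filter_upwards [hxv, Metric.tendsto_nhds.1 hv (ε / 2) (half_pos hε)] with i hxi hvi
  rw [dist_zero_right] at hvi ⊢
  calc ‖x i‖ ≤ ‖x i - v i‖ + ‖v i‖ := norm_le_norm_sub_add _ _
    _ < ε := by linarith

theorem tendsto_of_tendsto_iSup_norm {ι α E : Type*} [SeminormedAddCommGroup E] {l : Filter ι}
    {G : ι → α → E} (hG : ∀ i, BddAbove (range fun a => ‖G i a‖))
    (h : Tendsto (fun i => ⨆ a, ‖G i a‖) l (𝓝 0)) (a : α) :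
    Tendsto (fun i => G i a) l (𝓝 0) :=
  squeeze_zero_norm (fun i => le_ciSup (hG i) a) h

theorem natCast_div_mem_Icc {k m : ℕ} (hk : k ≤ m + 1) : (k / (m + 1) : ℝ) ∈ Icc (0 : ℝ) 1 :=
  ⟨by positivity, div_le_one_of_le₀ (by exact_mod_cast hk) (by positivity)⟩

theorem integrableOn_Icc_of_forall_norm_le {E : Type*} [NormedAddCommGroup E] {h : ℝ → E}
    {a b C : ℝ} (hm : AEStronglyMeasurable h) (hC : ∀ t ∈ Icc a b, ‖h t‖ ≤ C) :
    IntegrableOn h (Icc a b) :=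
  Measure.integrableOn_of_bounded measure_Icc_lt_top.ne hm
    (ae_restrict_of_forall_mem measurableSet_Icc hC)

theorem norm_integral_le_of_norm_le_on_unit_interval {E : Type*} [NormedAddCommGroup E]
    [NormedSpace ℝ E] {h : ℝ → E} {C : ℝ} (hC : ∀ t ∈ Icc (0 : ℝ) 1, ‖h t‖ ≤ C) {t : ℝ}
    (ht : t ∈ Icc (0 : ℝ) 1) :
    ‖∫ s in (0 : ℝ)..t, h s‖ ≤ C := by
  have hC0 : 0 ≤ C := (norm_nonneg _).trans (hC 0 ⟨le_rfl, zero_le_one⟩)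
  calc ‖∫ s in (0 : ℝ)..t, h s‖ ≤ C * |t - 0| := norm_integral_le_of_norm_le_const fun s hs =>
        hC s (uIoc_subset_uIcc.trans (uIcc_subset_Icc ⟨le_rfl, zero_le_one⟩ ht) hs)
    _ ≤ C * 1 := by
        gcongr
        rw [sub_zero, abs_of_nonneg ht.1]
        exact ht.2
    _ = C := mul_one C

theorem IntervalIntegrable.exists_continuous_integral_norm_sub_le {E : Type*}
    [NormedAddCommGroup E] [NormedSpace ℝ E] {f : ℝ → E} {a b : ℝ} (hab : a ≤ b)
    (hf : IntervalIntegrable f volume a b) {ε : ℝ} (hε : 0 < ε) :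
    ∃ g : ℝ → E, Continuous g ∧ ∫ t in a..b, ‖f t - g t‖ ≤ ε := by
  have hfi : Integrable ((Ioc a b).indicator f) := hf.1.integrable_indicator measurableSet_Ioc
  obtain ⟨g, -, hfg, hg, hgi⟩ := hfi.exists_hasCompactSupport_integral_sub_le hε
  refine ⟨g, hg, ?_⟩
  rw [integral_of_le hab]
  calc ∫ t in Ioc a b, ‖f t - g t‖
      = ∫ t in Ioc a b, ‖(Ioc a b).indicator f t - g t‖ :=
        setIntegral_congr_fun measurableSet_Ioc fun t ht => by rw [indicator_of_mem ht]
    _ ≤ ∫ t, ‖(Ioc a b).indicator f t - g t‖ :=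
        setIntegral_le_integral (hfi.sub hgi).norm (.of_forall fun _ => norm_nonneg _)
    _ ≤ ε := hfg

theorem sq_integral_le_integral_sq {h : ℝ → ℝ} (h1 : IntervalIntegrable h volume 0 1)
    (h2 : IntervalIntegrable (fun t => h t ^ 2) volume 0 1) :
    (∫ t in (0 : ℝ)..1, h t) ^ 2 ≤ ∫ t in (0 : ℝ)..1, h t ^ 2 := by
  set m := ∫ t in (0 : ℝ)..1, h t
  have hvar : ∫ t in (0 : ℝ)..1, (h t - m) ^ 2 = (∫ t in (0 : ℝ)..1, h t ^ 2) - m ^ 2 := by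
    calc ∫ t in (0 : ℝ)..1, (h t - m) ^ 2 = ∫ t in (0 : ℝ)..1, (h t ^ 2 - 2 * m * h t + m ^ 2) :=
          integral_congr fun t _ => by ring
      _ = (∫ t in (0 : ℝ)..1, h t ^ 2) - m ^ 2 := by
          rw [integral_add (h2.sub (h1.const_mul _)) intervalIntegrable_const,
            integral_sub h2 (h1.const_mul _), intervalIntegral.integral_const_mul]
          simp only [intervalIntegral.integral_const, sub_zero, smul_eq_mul, one_mul]
          ring
  have hnonneg : 0 ≤ ∫ t in (0 : ℝ)..1, (h t - m) ^ 2 :=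
    integral_nonneg zero_le_one fun t _ => sq_nonneg _
  linarith

theorem tendsto_integral_norm_of_tendsto_integral_norm_sq {ι E : Type*} [NormedAddCommGroup E]
    {l : Filter ι} {d : ι → ℝ → E} {C : ℝ} (hd : ∀ i, AEStronglyMeasurable (d i))
    (hC : ∀ i, ∀ t ∈ Icc (0 : ℝ) 1, ‖d i t‖ ≤ C)
    (hsq : Tendsto (fun i => ∫ t in (0 : ℝ)..1, ‖d i t‖ ^ 2) l (𝓝 0)) :
    Tendsto (fun i => ∫ t in (0 : ℝ)..1, ‖d i t‖) l (𝓝 0) := by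
  have hint : ∀ i (n : ℕ), IntervalIntegrable (fun t => ‖d i t‖ ^ n) volume 0 1 := fun i n =>
    (intervalIntegrable_iff_integrableOn_Icc_of_le zero_le_one).2
      (integrableOn_Icc_of_forall_norm_le (C := C ^ n) ((hd i).norm.pow n) fun t ht => by
        rw [Real.norm_of_nonneg (by positivity)]
        exact pow_le_pow_left₀ (norm_nonneg _) (hC i t ht) n)
  refine squeeze_zero_norm (fun i => Real.abs_le_sqrt ?_) (by simpa using hsq.sqrt)
  simpa using sq_integral_le_integral_sq (by simpa using hint i 1) (hint i 2)

theorem tendsto_integral_sub_of_tendsto_iSup {ι E : Type*} [NormedAddCommGroup E]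
    [NormedSpace ℝ E] {l : Filter ι} {f : ℝ → E} {F : ι → ℝ → E} {C : ℝ}
    (hf : IntegrableOn f (Icc 0 1)) (hF : ∀ i, IntegrableOn (F i) (Icc 0 1))
    (hfC : ∀ t ∈ Icc (0 : ℝ) 1, ‖f t‖ ≤ C) (hFC : ∀ i, ∀ t ∈ Icc (0 : ℝ) 1, ‖F i t‖ ≤ C)
    (hconv : Tendsto (fun i => ⨆ t : Icc (0 : ℝ) 1,
      ‖(∫ s in (0 : ℝ)..(t : ℝ), F i s) - ∫ s in (0 : ℝ)..(t : ℝ), f s‖) l (𝓝 0))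
    {t : ℝ} (ht : t ∈ Icc (0 : ℝ) 1) :
    Tendsto (fun i => ∫ s in (0 : ℝ)..t, (F i s - f s)) l (𝓝 0) := by
  have hbdd : ∀ i, BddAbove (range fun t : Icc (0 : ℝ) 1 =>
      ‖(∫ s in (0 : ℝ)..(t : ℝ), F i s) - ∫ s in (0 : ℝ)..(t : ℝ), f s‖) := fun i => by
    refine ⟨C + C, forall_mem_range.2 fun t => (norm_sub_le _ _).trans (add_le_add ?_ ?_)⟩
    · exact norm_integral_le_of_norm_le_on_unit_interval (hFC i) t.2
    · exact norm_integral_le_of_norm_le_on_unit_interval hfC t.2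
  refine (tendsto_of_tendsto_iSup_norm hbdd hconv ⟨t, ht⟩).congr fun i => ?_
  have hsub : uIcc 0 t ⊆ Icc (0 : ℝ) 1 := uIcc_subset_Icc ⟨le_rfl, zero_le_one⟩ ht
  exact (integral_sub ((hF i).mono_set hsub).intervalIntegrable
    (hf.mono_set hsub).intervalIntegrable).symm

section Inner

variable {E : Type*} [NormedAddCommGroup E] [InnerProductSpace ℝ E]

theorem norm_sub_sq_eq_neg_two_inner {x y : E} (hx : ‖x‖ = 1) (hy : ‖y‖ = 1) :
    ‖x - y‖ ^ 2 = -2 * ⟪y, x - y⟫_ℝ := by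
  rw [norm_sub_sq_real, inner_sub_right, real_inner_self_eq_norm_sq, real_inner_comm, hx, hy]
  ring

theorem integral_norm_sub_sq_eq_neg_two_mul_integral_inner {f g : ℝ → E}
    (hf : ∀ t ∈ Icc (0 : ℝ) 1, ‖f t‖ = 1) (hg : ∀ t ∈ Icc (0 : ℝ) 1, ‖g t‖ = 1) :
    ∫ t in (0 : ℝ)..1, ‖g t - f t‖ ^ 2 = -2 * ∫ t in (0 : ℝ)..1, ⟪f t, g t - f t⟫_ℝ := by
  rw [← intervalIntegral.integral_const_mul]
  refine integral_congr fun t ht => ?_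
  rw [uIcc_of_le zero_le_one] at ht
  exact norm_sub_sq_eq_neg_two_inner (hg t ht) (hf t ht)

theorem Integrable.inner_of_ae_norm_le {α : Type*} [MeasurableSpace α] {μ : Measure α}
    {f u : α → E} {C : ℝ} (hf : Integrable f μ) (hu : AEStronglyMeasurable u μ)
    (hC : ∀ᵐ x ∂μ, ‖u x‖ ≤ C) :
    Integrable (fun x => ⟪f x, u x⟫_ℝ) μ := by
  refine (hf.norm.mul_const C).mono' (hf.1.inner hu) ?_
  filter_upwards [hC] with x hx
  exact (norm_inner_le_norm _ _).trans (mul_le_mul_of_nonneg_left hx (norm_nonneg _))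

theorem IntervalIntegrable.inner_of_norm_le {φ u : ℝ → E} {a b C : ℝ}
    (hφ : IntervalIntegrable φ volume a b) (hu : IntervalIntegrable u volume a b)
    (hC : ∀ t ∈ uIoc a b, ‖u t‖ ≤ C) :
    IntervalIntegrable (fun t => ⟪φ t, u t⟫_ℝ) volume a b := by
  rw [intervalIntegrable_iff] at *
  exact Integrable.inner_of_ae_norm_le hφ hu.1 (ae_restrict_of_forall_mem measurableSet_uIoc hC)

theorem norm_integral_inner_sub_integral_inner_le {g u : ℝ → E} {a b η C : ℝ} (hab : a ≤ b)
    (hη : 0 ≤ η) (hg : IntervalIntegrable (fun t => ⟪g t, u t⟫_ℝ) volume a b)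
    (hc : IntervalIntegrable (fun t => ⟪g a, u t⟫_ℝ) volume a b)
    (hgη : ∀ t ∈ Ioc a b, ‖g t - g a‖ ≤ η) (hC : ∀ t ∈ Ioc a b, ‖u t‖ ≤ C) :
    ‖(∫ t in a..b, ⟪g t, u t⟫_ℝ) - ∫ t in a..b, ⟪g a, u t⟫_ℝ‖ ≤ η * C * (b - a) := by
  rw [← integral_sub hg hc, ← abs_of_nonneg (sub_nonneg.2 hab)]
  refine norm_integral_le_of_norm_le_const fun t ht => ?_
  rw [uIoc_of_le hab] at ht
  rw [← inner_sub_left]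
  exact (norm_inner_le_norm _ _).trans (mul_le_mul (hgη t ht) (hC t ht) (norm_nonneg _) hη)

theorem norm_integral_inner_sub_sum_le {g u : ℝ → E} {C η δ : ℝ} {m : ℕ}
    (hu : IntegrableOn u (Icc 0 1)) (hC : ∀ t ∈ Icc (0 : ℝ) 1, ‖u t‖ ≤ C)
    (hg : ContinuousOn g (Icc 0 1)) (hη : 0 ≤ η)
    (hgδ : ∀ x ∈ Icc (0 : ℝ) 1, ∀ y ∈ Icc (0 : ℝ) 1, dist x y < δ → dist (g x) (g y) < η)
    (hm : 1 / ((m : ℝ) + 1) < δ) :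
    ‖(∫ t in (0 : ℝ)..1, ⟪g t, u t⟫_ℝ) - ∑ k ∈ Finset.range (m + 1),
      ∫ t in (k / (m + 1) : ℝ)..(k + 1 : ℕ) / (m + 1), ⟪g (k / (m + 1)), u t⟫_ℝ‖ ≤ C * η := by
  set a : ℕ → ℝ := fun k => k / (m + 1) with ha
  have ha_step : ∀ k, a (k + 1) - a k = 1 / (m + 1) := fun k => by
    simp only [ha]; push_cast; ring
  have hint : ∀ {φ : ℝ → E}, ContinuousOn φ (Icc 0 1) → ∀ {x y}, x ∈ Icc (0 : ℝ) 1 →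
      y ∈ Icc (0 : ℝ) 1 → IntervalIntegrable (fun t => ⟪φ t, u t⟫_ℝ) volume x y :=
    fun hφ x y hx hy =>
      (hφ.mono (uIcc_subset_Icc hx hy)).intervalIntegrable.inner_of_norm_le
        (hu.mono_set (uIcc_subset_Icc hx hy)).intervalIntegrable
        fun t ht => hC t (uIoc_subset_uIcc.trans (uIcc_subset_Icc hx hy) ht)
  have hsplit : ∫ t in (0 : ℝ)..1, ⟪g t, u t⟫_ℝ =
      ∑ k ∈ Finset.range (m + 1), ∫ t in a k..a (k + 1), ⟪g t, u t⟫_ℝ := by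
    rw [sum_integral_adjacent_intervals fun k hk =>
      hint hg (natCast_div_mem_Icc hk.le) (natCast_div_mem_Icc hk)]
    simp [div_self (Nat.cast_add_one_ne_zero (R := ℝ) m)]
  rw [hsplit, ← Finset.sum_sub_distrib]
  refine (norm_sum_le _ _).trans ?_
  calc ∑ k ∈ Finset.range (m + 1), ‖(∫ t in a k..a (k + 1), ⟪g t, u t⟫_ℝ) -
        ∫ t in a k..a (k + 1), ⟪g (a k), u t⟫_ℝ‖
      ≤ ∑ k ∈ Finset.range (m + 1), η * C * (1 / (m + 1)) := by
        refine Finset.sum_le_sum fun k hk => ?_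
        have hk0 := natCast_div_mem_Icc (Finset.mem_range.1 hk).le
        have hk1 := natCast_div_mem_Icc (Finset.mem_range.1 hk)
        have hak : a k ≤ a (k + 1) := sub_nonneg.1 (ha_step k ▸ by positivity)
        have hIcc : Ioc (a k) (a (k + 1)) ⊆ Icc 0 1 :=
          Ioc_subset_Icc_self.trans (Icc_subset_Icc hk0.1 hk1.2)
        rw [← ha_step k]
        refine norm_integral_inner_sub_integral_inner_le hak hη (hint hg hk0 hk1)
          (hint continuousOn_const hk0 hk1) (fun t ht => ?_) fun t ht => hC t (hIcc ht)
        rw [← dist_eq_norm]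
        refine (hgδ t (hIcc ht) _ hk0 ?_).le
        rw [Real.dist_eq, abs_of_pos (sub_pos.2 ht.1)]
        linarith [ht.2, ha_step k]
    _ = C * η := by
        rw [Finset.sum_const, Finset.card_range, nsmul_eq_mul]
        field_simp
        push_cast
        ring

end Inner

section WeakConvergence

variable {ι E : Type*} [NormedAddCommGroup E] [InnerProductSpace ℝ E] [CompleteSpace E]
  {l : Filter ι} {u : ι → ℝ → E}

theorem tendsto_integral_inner_const (hu : ∀ i, IntegrableOn (u i) (Icc 0 1))
    (hU : ∀ t ∈ Icc (0 : ℝ) 1, Tendsto (fun i => ∫ s in (0 : ℝ)..t, u i s) l (𝓝 0))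
    {a b : ℝ} (ha : a ∈ Icc (0 : ℝ) 1) (hb : b ∈ Icc (0 : ℝ) 1) (c : E) :
    Tendsto (fun i => ∫ t in a..b, ⟪c, u i t⟫_ℝ) l (𝓝 0) := by
  have hint : ∀ i {x}, x ∈ Icc (0 : ℝ) 1 → IntervalIntegrable (u i) volume 0 x := fun i x hx =>
    ((hu i).mono_set (uIcc_subset_Icc ⟨le_rfl, zero_le_one⟩ hx)).intervalIntegrable
  have hprim : ∀ i, ∫ t in a..b, ⟪c, u i t⟫_ℝ =
      ⟪c, (∫ s in (0 : ℝ)..b, u i s) - ∫ s in (0 : ℝ)..a, u i s⟫_ℝ := fun i => by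
    rw [integral_interval_sub_left (hint i hb) (hint i ha)]
    exact (innerSL ℝ c).intervalIntegral_comp_comm ((hint i ha).symm.trans (hint i hb))
  simp_rw [hprim]
  simpa using tendsto_const_nhds.inner ((hU b hb).sub (hU a ha))

theorem tendsto_integral_inner_of_continuousOn {C : ℝ} (hu : ∀ i, IntegrableOn (u i) (Icc 0 1))
    (hC : ∀ i, ∀ t ∈ Icc (0 : ℝ) 1, ‖u i t‖ ≤ C)
    (hU : ∀ t ∈ Icc (0 : ℝ) 1, Tendsto (fun i => ∫ s in (0 : ℝ)..t, u i s) l (𝓝 0))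
    {g : ℝ → E} (hg : ContinuousOn g (Icc 0 1)) :
    Tendsto (fun i => ∫ t in (0 : ℝ)..1, ⟪g t, u i t⟫_ℝ) l (𝓝 0) := by
  refine tendsto_zero_of_forall_eventually_norm_sub_le C fun η hη => ?_
  obtain ⟨δ, hδ, hgδ⟩ := Metric.uniformContinuousOn_iff.1
    (isCompact_Icc.uniformContinuousOn_of_continuous hg) η hη
  obtain ⟨m, hm⟩ := exists_nat_one_div_lt hδ
  have hsteps : Tendsto (fun i => ∑ k ∈ Finset.range (m + 1),
      ∫ t in (k / (m + 1) : ℝ)..(k + 1 : ℕ) / (m + 1), ⟪g (k / (m + 1)), u i t⟫_ℝ)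
      l (𝓝 0) := by
    simpa using tendsto_finsetSum _ fun k hk => tendsto_integral_inner_const hu hU
      (natCast_div_mem_Icc (Finset.mem_range.1 hk).le)
      (natCast_div_mem_Icc (Finset.mem_range.1 hk)) _
  exact ⟨_, hsteps, .of_forall fun i =>
    norm_integral_inner_sub_sum_le (hu i) (hC i) hg hη.le hgδ hm⟩

theorem tendsto_integral_inner_of_integrableOn {C : ℝ}
    (hu : ∀ i, IntegrableOn (u i) (Icc 0 1)) (hC : ∀ i, ∀ t ∈ Icc (0 : ℝ) 1, ‖u i t‖ ≤ C)
    (hU : ∀ t ∈ Icc (0 : ℝ) 1, Tendsto (fun i => ∫ s in (0 : ℝ)..t, u i s) l (𝓝 0))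
    {f : ℝ → E} (hf : IntegrableOn f (Icc 0 1)) :
    Tendsto (fun i => ∫ t in (0 : ℝ)..1, ⟪f t, u i t⟫_ℝ) l (𝓝 0) := by
  have hf' := (intervalIntegrable_iff_integrableOn_Icc_of_le zero_le_one).2 hf
  refine tendsto_zero_of_forall_eventually_norm_sub_le C fun η hη => ?_
  obtain ⟨g, hg, hfg⟩ := hf'.exists_continuous_integral_norm_sub_le zero_le_one hη
  refine ⟨_, tendsto_integral_inner_of_continuousOn hu hC hU hg.continuousOn,
    .of_forall fun i => ?_⟩
  have hu_int := (intervalIntegrable_iff_integrableOn_Icc_of_le zero_le_one).2 (hu i)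
  have hu_le : ∀ t ∈ uIoc (0 : ℝ) 1, ‖u i t‖ ≤ C := fun t ht =>
    hC i t (uIoc_subset_uIcc.trans (uIcc_of_le zero_le_one).le ht)
  have hC0 : 0 ≤ C := (norm_nonneg _).trans (hC i 0 ⟨le_rfl, zero_le_one⟩)
  rw [← integral_sub (hf'.inner_of_norm_le hu_int hu_le)
    ((hg.intervalIntegrable 0 1).inner_of_norm_le hu_int hu_le)]
  calc ‖∫ t in (0 : ℝ)..1, (⟪f t, u i t⟫_ℝ - ⟪g t, u i t⟫_ℝ)‖
      ≤ ∫ t in (0 : ℝ)..1, C * ‖f t - g t‖ := by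
        refine norm_integral_le_of_norm_le zero_le_one (.of_forall fun t ht => ?_)
          ((hf'.sub (hg.intervalIntegrable 0 1)).norm.const_mul C)
        rw [← inner_sub_left, mul_comm]
        exact (norm_inner_le_norm _ _).trans
          (mul_le_mul_of_nonneg_left (hu_le t (by rwa [uIoc_of_le zero_le_one])) (norm_nonneg _))
    _ = C * ∫ t in (0 : ℝ)..1, ‖f t - g t‖ := intervalIntegral.integral_const_mul _ _
    _ ≤ C * η := mul_le_mul_of_nonneg_left hfg hC0

end WeakConvergence

/-- Let `f` and `(f_n)` be measurable functions from `[0,1]` to the unit sphere of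
`ℝ^N`.  If the primitives of the `f_n` converge uniformly on `[0,1]` to the primitive
of `f`, then `f_n → f` in `L¹`: `∫₀¹ ‖f_n(t) − f(t)‖ dt → 0`. -/
theorem tendsto_L1_of_uniform_convergence_of_primitives
    (N : ℕ) (f : ℝ → EuclideanSpace ℝ (Fin N)) (F : ℕ → ℝ → EuclideanSpace ℝ (Fin N))
    (hf : Measurable f) (hF : ∀ n, Measurable (F n))
    (hfnorm : ∀ t ∈ Set.Icc (0 : ℝ) 1, ‖f t‖ = 1)
    (hFnorm : ∀ n, ∀ t ∈ Set.Icc (0 : ℝ) 1, ‖F n t‖ = 1)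
    (hconv : Tendsto
      (fun n => ⨆ t : Set.Icc (0 : ℝ) 1,
        ‖(∫ s in (0 : ℝ)..(t : ℝ), F n s) - ∫ s in (0 : ℝ)..(t : ℝ), f s‖)
      atTop (nhds 0)) :
    Tendsto (fun n => ∫ t in (0 : ℝ)..1, ‖F n t - f t‖) atTop (nhds 0) := by
  have hf_int : IntegrableOn f (Icc 0 1) :=
    integrableOn_Icc_of_forall_norm_le hf.aestronglyMeasurable fun t ht => (hfnorm t ht).le
  have hF_int : ∀ n, IntegrableOn (F n) (Icc 0 1) := fun n =>
    integrableOn_Icc_of_forall_norm_le (hF n).aestronglyMeasurable fun t ht => (hFnorm n t ht).le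
  have hu_le : ∀ n, ∀ t ∈ Icc (0 : ℝ) 1, ‖F n t - f t‖ ≤ 2 := fun n t ht =>
    (norm_sub_le _ _).trans (by rw [hFnorm n t ht, hfnorm t ht]; norm_num)
  have hU : ∀ t ∈ Icc (0 : ℝ) 1,
      Tendsto (fun n => ∫ s in (0 : ℝ)..t, (F n s - f s)) atTop (𝓝 0) := fun t ht =>
    tendsto_integral_sub_of_tendsto_iSup hf_int hF_int (fun t ht => (hfnorm t ht).le)
      (fun n t ht => (hFnorm n t ht).le) hconv ht
  have hweak : Tendsto (fun n => ∫ t in (0 : ℝ)..1, ⟪f t, F n t - f t⟫_ℝ) atTop (𝓝 0) :=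
    tendsto_integral_inner_of_integrableOn (fun n => (hF_int n).sub hf_int) hu_le hU hf_int
  have hsq : Tendsto (fun n => ∫ t in (0 : ℝ)..1, ‖F n t - f t‖ ^ 2) atTop (𝓝 0) := by
    simpa [integral_norm_sub_sq_eq_neg_two_mul_integral_inner hfnorm (hFnorm _)]
      using hweak.const_mul (-2)
  exact tendsto_integral_norm_of_tendsto_integral_norm_sq
    (fun n => ((hF n).sub hf).aestronglyMeasurable) hu_le hsq
end

section
/- Let G be a compact group, n ≥ 1, and 𝒪 a conjugacy class of G. Let δ_{𝒪(n)} be the unique probability measure on 𝒪(n) = {(x₁,…,x_n) ∈ Gⁿ : x₁⋯x_n ∈ 𝒪} invariant under the action (g₁,…,g_n)·(x₁,…,x_n) = (g₁x₁g₂⁻¹, …, g_n x_n g₁⁻¹). Then for every continuous f : Gⁿ → ℝ, ∫ f dδ_{𝒪(n)} = ∫_{Gⁿ} f(x₁,…,x_{n−1}, (x₁⋯x_{n−1})⁻¹ y) dx₁⋯dx_{n−1} δ_𝒪(dy), where δ_𝒪 is the invariant probability measure on 𝒪 and dx is Haar measure. -/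
/-!
Averaging the invariance of `μ` over the gauge elements `g = (1, k₁, …, kₘ)` with `k` Haar
distributed gives `∫ f dμ = ∫ₓ ∫ₖ f (g • x) dk dμ(x)`. For fixed `x`, the first `m` coordinates
of `g • x` are `k_{j-1} x_j k_j⁻¹` (with `k₀ = 1`), a triangular change of variables preserving
Haar measure on `Gᵐ`, and since `g₁ = 1` the last coordinate is determined by them and by
`x₁⋯xₙ`. So the inner integral only depends on `x₁⋯xₙ`, through `y ↦ ∫ f (h, (h₁⋯hₘ)⁻¹ y) dh`.
It remains that the image of `μ` under the product map and `ν` are both conjugation-invariant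
probability measures on `𝒪`, and there is only one: averaging over a Haar-random conjugation
identifies each of them with the image of Haar measure under `g ↦ g x₀ g⁻¹`, by right invariance
of Haar measure.
-/

open MeasureTheory Measure

section CompactGroup

variable {G : Type*} [Group G] [TopologicalSpace G] [IsTopologicalGroup G] [CompactSpace G]
  [MeasurableSpace G] [BorelSpace G]

lemma isHaarMeasure_of_compactSpace (μ : Measure G) [IsFiniteMeasure μ] [NeZero μ]
    [μ.IsMulLeftInvariant] : μ.IsHaarMeasure :=
  isHaarMeasure_of_isCompact_nonempty_interior μ Set.univ isCompact_univ (by simp)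
    (by simpa using NeZero.ne μ) (by simp)

variable (μ : Measure G) [IsProbabilityMeasure μ] [μ.IsMulLeftInvariant]

lemma isMulRightInvariant_of_isProbabilityMeasure : μ.IsMulRightInvariant := by
  have := isHaarMeasure_of_compactSpace μ
  refine ⟨fun g => ?_⟩
  have := isProbabilityMeasure_map (μ := μ) (measurable_mul_const g).aemeasurable
  exact isHaarMeasure_eq_of_isProbabilityMeasure _ _

lemma isInvInvariant_of_isProbabilityMeasure : μ.IsInvInvariant := by
  have := isHaarMeasure_of_compactSpace μ
  have := isMulRightInvariant_of_isProbabilityMeasure μ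
  have : IsProbabilityMeasure μ.inv := isProbabilityMeasure_map measurable_inv.aemeasurable
  have := isHaarMeasure_of_compactSpace μ.inv
  exact ⟨isHaarMeasure_eq_of_isProbabilityMeasure μ.inv μ⟩

end CompactGroup

lemma map_uncurry_prod_eq_of_forall_map_eq {α β : Type*} [MeasurableSpace α] [MeasurableSpace β]
    (σ : Measure α) [IsProbabilityMeasure σ] {ρ : Measure β} [SFinite ρ] {T : α → β → β}
    (hT : Measurable (Function.uncurry T)) (hρ : ∀ a, ρ.map (T a) = ρ) :
    (σ.prod ρ).map (Function.uncurry T) = ρ := by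
  ext s hs
  have hslice (a : α) : ρ (T a ⁻¹' s) = ρ s := by
    have hTa : Measurable (T a) := hT.comp measurable_prodMk_left
    rw [← map_apply hTa hs, hρ a]
  rw [map_apply hT hs, Measure.prod_apply (hT hs)]
  calc ∫⁻ a, ρ (Prod.mk a ⁻¹' (Function.uncurry T ⁻¹' s)) ∂σ = ∫⁻ _, ρ s ∂σ :=
        lintegral_congr hslice
    _ = ρ s := by rw [lintegral_const, measure_univ, mul_one]

lemma integral_eq_integral_integral_of_forall_map_eq {α β : Type*} [MeasurableSpace α]
    [MeasurableSpace β] (σ : Measure α) [IsProbabilityMeasure σ] {ρ : Measure β} [SFinite ρ]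
    {T : α → β → β} (hT : Measurable (Function.uncurry T)) (hρ : ∀ a, ρ.map (T a) = ρ)
    {E : Type*} [NormedAddCommGroup E] [NormedSpace ℝ E] {f : β → E}
    (hf : AEStronglyMeasurable f ρ)
    (hint : Integrable (fun p => f (T p.1 p.2)) (σ.prod ρ)) :
    ∫ x, f x ∂ρ = ∫ x, ∫ a, f (T a x) ∂σ ∂ρ := by
  have hmap := map_uncurry_prod_eq_of_forall_map_eq σ hT hρ
  conv_lhs => rw [← hmap]
  rw [integral_map hT.aemeasurable (by rwa [hmap])]
  exact integral_prod_symm _ hint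

section Gauge

variable {G : Type*} [Group G]

def chainConj {n : ℕ} (g : Fin (n + 1) → G) (x : Fin n → G) : Fin n → G :=
  fun i => g i.castSucc * x i * (g i.succ)⁻¹

/-- The action `(g₁x₁g₂⁻¹, …, gₙxₙg₁⁻¹)` defining `𝒪(n)`: `i + 1` wraps around in `Fin (n + 1)`. -/
def cyclicConj {n : ℕ} (g x : Fin (n + 1) → G) : Fin (n + 1) → G :=
  fun i => g i * x i * (g (i + 1))⁻¹

lemma prod_ofFn_chainConj {n : ℕ} (g : Fin (n + 1) → G) (x : Fin n → G) :
    (List.ofFn (chainConj g x)).prod = g 0 * (List.ofFn x).prod * (g (Fin.last n))⁻¹ := by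
  induction n with
  | zero => simp
  | succ n ih =>
    have htail : (fun i => chainConj g x i.succ) =
        chainConj (fun i => g i.succ) (fun i => x i.succ) := rfl
    rw [List.ofFn_succ, List.prod_cons, htail, ih, List.ofFn_succ, List.prod_cons]
    simp only [chainConj, Fin.castSucc_zero, Fin.succ_zero_eq_one, Fin.succ_last]
    group

lemma cyclicConj_eq_snoc {m : ℕ} (g : Fin (m + 1) → G) (hg : g 0 = 1) (x : Fin (m + 1) → G) :
    cyclicConj g x = Fin.snoc (chainConj g (Fin.init x))
      ((List.ofFn (chainConj g (Fin.init x))).prod⁻¹ * (List.ofFn x).prod) := by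
  funext i
  induction i using Fin.lastCases with
  | last =>
    rw [Fin.snoc_last, prod_ofFn_chainConj, cyclicConj, Fin.last_add_one, hg, List.ofFn_succ',
      List.prod_concat, show Fin.init x = fun i => x i.castSucc from rfl]
    group
  | cast j =>
    rw [Fin.snoc_castSucc, cyclicConj, Fin.coeSucc_eq_succ]
    rfl

end Gauge

section MeasurableGroup

variable {G : Type*} [Group G] [MeasurableSpace G] [MeasurableMul₂ G] [MeasurableInv G]

lemma measurable_chainConj {n : ℕ} (x : Fin n → G) :
    Measurable fun g : Fin (n + 1) → G => chainConj g x := by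
  unfold chainConj
  fun_prop

lemma measurePreserving_chainConj_cons (μ : Measure G) [SigmaFinite μ] [μ.IsMulLeftInvariant]
    [μ.IsInvInvariant] {n : ℕ} (c : G) (x : Fin n → G) :
    MeasurePreserving (fun k => chainConj (Fin.cons c k) x)
      (Measure.pi fun _ => μ) (Measure.pi fun _ => μ) := by
  induction n generalizing c with
  | zero =>
    have : (fun k : Fin 0 → G => chainConj (Fin.cons c k) x) = id :=
      funext fun _ => funext (·.elim0)
    rw [this]
    exact .id _
  | succ n ih =>
    let e := MeasurableEquiv.piFinSuccAbove (fun _ : Fin (n + 1) => G) 0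
    have he : MeasurePreserving e (Measure.pi fun _ => μ) (μ.prod (Measure.pi fun _ => μ)) :=
      measurePreserving_piFinSuccAbove (fun _ => μ) 0
    have hcons : Measurable fun p : G × (Fin n → G) => (Fin.cons p.1 p.2 : Fin (n + 1) → G) := by
      convert e.symm.measurable using 1
      funext p
      simp only [e, MeasurableEquiv.piFinSuccAbove_symm_apply, Fin.insertNthEquiv_zero]
      rfl
    have hhead : MeasurePreserving (fun a => c * x 0 * a⁻¹) μ μ :=
      (measurePreserving_mul_left μ _).comp (measurePreserving_inv μ)
    -- `chainConj (cons c k) x`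
    --   `= cons (c * x 0 * (k 0)⁻¹) (chainConj (cons (k 0) (tail k)) (tail x))`
    have hskew := hhead.skew_product (g := fun a k => chainConj (Fin.cons a k) (Fin.tail x))
      ((measurable_chainConj _).comp hcons) (.of_forall fun a => (ih a (Fin.tail x)).map_eq)
    convert he.symm.comp (hskew.comp he) using 1
    funext k
    apply e.injective
    simp only [Function.comp_apply, MeasurableEquiv.apply_symm_apply]
    ext
    · simp [e, chainConj]
    · simp [e, chainConj, Fin.tail]

lemma map_conj_prod_eq_map_conj (μ : Measure G) [IsProbabilityMeasure μ] [μ.IsMulRightInvariant]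
    {ρ : Measure G} [IsProbabilityMeasure ρ] {x₀ : G} (hρ : ∀ᵐ y ∂ρ, IsConj x₀ y) :
    (μ.prod ρ).map (fun p => p.1 * p.2 * p.1⁻¹) = μ.map (fun g => g * x₀ * g⁻¹) := by
  ext s hs
  have hmeas : Measurable fun p : G × G => p.1 * p.2 * p.1⁻¹ := by fun_prop
  rw [map_apply hmeas hs, prod_apply_symm (hmeas hs), map_apply (by fun_prop) hs]
  calc ∫⁻ y, μ ((fun g => (g, y)) ⁻¹' ((fun p : G × G => p.1 * p.2 * p.1⁻¹) ⁻¹' s)) ∂ρ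
      = ∫⁻ _, μ ((fun g => g * x₀ * g⁻¹) ⁻¹' s) ∂ρ := by
        refine lintegral_congr_ae (hρ.mono fun y hy => ?_)
        obtain ⟨c, rfl⟩ := isConj_iff.1 hy
        rw [← measure_preimage_mul_right μ c]
        refine congrArg μ (Set.ext fun g => ?_)
        simp only [Set.mem_preimage, mul_inv_rev, mul_assoc]
    _ = μ ((fun g => g * x₀ * g⁻¹) ⁻¹' s) := by rw [lintegral_const, measure_univ, mul_one]

lemma eq_map_conj_of_forall_map_conj_eq (μ : Measure G) [IsProbabilityMeasure μ]
    [μ.IsMulRightInvariant] {ρ : Measure G} [IsProbabilityMeasure ρ] {x₀ : G}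
    (hρ : ∀ᵐ y ∂ρ, IsConj x₀ y) (hinv : ∀ g, ρ.map (fun y => g * y * g⁻¹) = ρ) :
    ρ = μ.map (fun g => g * x₀ * g⁻¹) := by
  rw [← map_conj_prod_eq_map_conj μ hρ]
  exact (map_uncurry_prod_eq_of_forall_map_eq μ (by fun_prop) hinv).symm

end MeasurableGroup

@[fun_prop]
lemma continuous_prod_ofFn {M : Type*} [Monoid M] [TopologicalSpace M] [ContinuousMul M]
    {n : ℕ} : Continuous fun x : Fin n → M => (List.ofFn x).prod := by
  simp_rw [List.ofFn_eq_map]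
  exact continuous_list_prod _ fun i _ => continuous_apply i

lemma isClosed_setOf_isConj {G : Type*} [Group G] [TopologicalSpace G] [IsTopologicalGroup G]
    [CompactSpace G] [T2Space G] (x₀ : G) : IsClosed {y | IsConj x₀ y} := by
  simp_rw [isConj_iff]
  exact (isCompact_range (by fun_prop : Continuous fun c : G => c * x₀ * c⁻¹)).isClosed

lemma ae_isConj_of_measure_eq_one {G : Type*} [Group G] [TopologicalSpace G]
    [IsTopologicalGroup G] [CompactSpace G] [T2Space G] [MeasurableSpace G]
    [OpensMeasurableSpace G] {ρ : Measure G} [IsProbabilityMeasure ρ] {x₀ : G}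
    (h : ρ {y | IsConj x₀ y} = 1) : ∀ᵐ y ∂ρ, IsConj x₀ y :=
  (ae_iff_measure_eq (isClosed_setOf_isConj x₀).measurableSet.nullMeasurableSet).2
    (by rw [h, measure_univ])

section TopologicalGroup

variable {G : Type*} [Group G] [TopologicalSpace G] [IsTopologicalGroup G]
  [SecondCountableTopology G] [MeasurableSpace G] [BorelSpace G]

lemma map_conj_map_prod_ofFn {n : ℕ} {μ : Measure (Fin n → G)} (g : G)
    (hμ : μ.map (fun x i => g * x i * g⁻¹) = μ) :
    (μ.map fun x => (List.ofFn x).prod).map (fun y => g * y * g⁻¹) =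
      μ.map fun x => (List.ofFn x).prod := by
  have hprod : Measurable fun x : Fin n → G => (List.ofFn x).prod :=
    continuous_prod_ofFn.measurable
  conv_rhs => rw [← hμ, map_map hprod (by fun_prop)]
  rw [map_map (by fun_prop) hprod]
  congr 1
  funext x
  exact (prod_ofFn_chainConj (fun _ => g) x).symm

lemma map_cyclicConj_cons_one (μ : Measure G) [SigmaFinite μ] [μ.IsMulLeftInvariant]
    [μ.IsInvInvariant] {m : ℕ} (x : Fin (m + 1) → G) :
    (Measure.pi fun _ : Fin m => μ).map (fun k => cyclicConj (Fin.cons 1 k) x) =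
      (Measure.pi fun _ => μ).map
        (fun h => Fin.snoc h ((List.ofFn h).prod⁻¹ * (List.ofFn x).prod)) := by
  have hsnoc : Measurable fun h : Fin m → G =>
      (Fin.snoc h ((List.ofFn h).prod⁻¹ * (List.ofFn x).prod) : Fin (m + 1) → G) := by
    fun_prop
  have hT := measurePreserving_chainConj_cons μ 1 (Fin.init x)
  have hfactor : (fun k => cyclicConj (Fin.cons 1 k) x) =
      (fun h => Fin.snoc h ((List.ofFn h).prod⁻¹ * (List.ofFn x).prod)) ∘
        fun k => chainConj (Fin.cons 1 k) (Fin.init x) :=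
    funext fun k => cyclicConj_eq_snoc _ (Fin.cons_zero _ _) x
  rw [hfactor, ← map_map hsnoc hT.measurable, hT.map_eq]

lemma eq_of_forall_map_conj_eq [CompactSpace G] [T2Space G] {x₀ : G} {ρ₁ ρ₂ : Measure G}
    [IsProbabilityMeasure ρ₁] [IsProbabilityMeasure ρ₂]
    (h₁ : ρ₁ {y | IsConj x₀ y} = 1) (h₂ : ρ₂ {y | IsConj x₀ y} = 1)
    (hinv₁ : ∀ g, ρ₁.map (fun y => g * y * g⁻¹) = ρ₁)
    (hinv₂ : ∀ g, ρ₂.map (fun y => g * y * g⁻¹) = ρ₂) : ρ₁ = ρ₂ := by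
  let haar := haarMeasure (⊤ : TopologicalSpace.PositiveCompacts G)
  have : IsProbabilityMeasure haar :=
    ⟨by rw [← TopologicalSpace.PositiveCompacts.coe_top]; exact haarMeasure_self⟩
  have := isMulRightInvariant_of_isProbabilityMeasure haar
  rw [eq_map_conj_of_forall_map_conj_eq haar (ae_isConj_of_measure_eq_one h₁) hinv₁,
    eq_map_conj_of_forall_map_conj_eq haar (ae_isConj_of_measure_eq_one h₂) hinv₂]

end TopologicalGroup

/-- Let `G` be a compact group with normalized Haar measure, `𝒪` a conjugacy class and
`μ = δ_{𝒪(n)}` the unique probability measure on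
`𝒪(n) = {(x₁,…,xₙ) : x₁⋯xₙ ∈ 𝒪} ⊆ Gⁿ` invariant under
`(g₁,…,gₙ)·(x₁,…,xₙ) = (g₁x₁g₂⁻¹,…,gₙxₙg₁⁻¹)` (here `n = m + 1 ≥ 1`).
Then for every continuous `f : Gⁿ → ℝ`,
`∫ f dδ_{𝒪(n)} = ∫ f(x₁,…,x_{n-1},(x₁⋯x_{n-1})⁻¹ y) dx₁⋯dx_{n-1} δ_𝒪(dy)`,
where `δ_𝒪` is the invariant probability measure on `𝒪`. -/
theorem integral_constrained_uniform_eq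
    {G : Type*} [Group G] [TopologicalSpace G] [IsTopologicalGroup G] [CompactSpace G]
    [T2Space G] [SecondCountableTopology G] [MeasurableSpace G] [BorelSpace G]
    (haar : Measure G) [IsProbabilityMeasure haar] [haar.IsMulLeftInvariant]
    (m : ℕ) (𝒪 : Set G) (x₀ : G) (h𝒪 : 𝒪 = {y | IsConj x₀ y})
    (μ : Measure (Fin (m + 1) → G)) [IsProbabilityMeasure μ]
    (hμsupp : μ {x | (List.ofFn x).prod ∈ 𝒪} = 1)
    (hμinv : ∀ g : Fin (m + 1) → G,
      Measure.map (fun x : Fin (m + 1) → G => fun i => g i * x i * (g (i + 1))⁻¹) μ = μ)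
    (ν : Measure G) [IsProbabilityMeasure ν]
    (hνsupp : ν 𝒪 = 1)
    (hνinv : ∀ g : G, Measure.map (fun x => g * x * g⁻¹) ν = ν)
    (f : (Fin (m + 1) → G) → ℝ) (hf : Continuous f) :
    ∫ x, f x ∂μ =
      ∫ y, ∫ x : Fin m → G, f (Fin.snoc x ((List.ofFn x).prod⁻¹ * y))
        ∂(Measure.pi fun _ => haar) ∂ν := by
  have := isInvInvariant_of_isProbabilityMeasure haar
  subst h𝒪
  have hprod : Continuous fun x : Fin (m + 1) → G => (List.ofFn x).prod := continuous_prod_ofFn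
  have := isProbabilityMeasure_map (μ := μ) hprod.aemeasurable
  have hν : μ.map (fun x => (List.ofFn x).prod) = ν :=
    eq_of_forall_map_conj_eq
      (by rwa [map_apply hprod.measurable (isClosed_setOf_isConj x₀).measurableSet]) hνsupp
      (fun g => map_conj_map_prod_ofFn g (hμinv fun _ => g)) hνinv
  have hact : Continuous fun p : (Fin m → G) × (Fin (m + 1) → G) =>
      cyclicConj (Fin.cons 1 p.1) p.2 := by
    unfold cyclicConj
    fun_prop
  have hΦ : Continuous fun p : G × (Fin m → G) =>
      f (Fin.snoc p.2 ((List.ofFn p.2).prod⁻¹ * p.1)) :=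
    hf.comp (continuous_snd.finSnoc (A := fun _ => G)
      ((continuous_prod_ofFn.comp continuous_snd).inv.mul continuous_fst))
  calc ∫ x, f x ∂μ = ∫ x, ∫ k, f (cyclicConj (Fin.cons 1 k) x) ∂(Measure.pi fun _ => haar) ∂μ :=
        integral_eq_integral_integral_of_forall_map_eq _ hact.measurable (fun _ => hμinv _)
          hf.aestronglyMeasurable
          ((hf.comp hact).integrable_of_hasCompactSupport (.of_compactSpace _))
    _ = ∫ x, ∫ h, f (Fin.snoc h ((List.ofFn h).prod⁻¹ * (List.ofFn x).prod))
          ∂(Measure.pi fun _ => haar) ∂μ := by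
        congr 1 with x
        have hk : Continuous fun k => cyclicConj (Fin.cons 1 k) x := hact.comp (.prodMk_left x)
        rw [← integral_map hk.aemeasurable hf.aestronglyMeasurable,
          map_cyclicConj_cons_one haar x, integral_map (by fun_prop) hf.aestronglyMeasurable]
    _ = _ := by
        rw [← hν, integral_map hprod.aemeasurable
          hΦ.stronglyMeasurable.integral_prod_right.aestronglyMeasurable]
end

section
/- Let G be a compact group, η the commutator measure (pushforward of Haar×Haar under (a,b) ↦ aba⁻¹b⁻¹) and κ the square measure (pushforward of Haar under a ↦ a²). Then κ * η = κ * κ * κ. -/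
/-!
Both sides are laws of words in independent Haar-distributed `a, b, c`: `κ * η` is the law of
`a² [b, c]` and `κ * κ * κ` that of `a² b² c²`. Left-multiplying one coordinate by a word in the
other two preserves `μ ⊗ μ ⊗ μ` (fibrewise left invariance), so words related by such Nielsen
moves have the same law, and `a² [b, c]` and `a² c² b²` both reduce to `a (c b c⁻¹) a b`.
-/

open MeasureTheory

namespace MeasureTheory

theorem MeasurePreserving.map_comp_eq {α β γ : Type*} [MeasurableSpace α] [MeasurableSpace β]
    [MeasurableSpace γ] {μa : Measure α} {μb : Measure β} {f : α → β} {g : β → γ}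
    (hf : MeasurePreserving f μa μb) (hg : Measurable g) :
    Measure.map (g ∘ f) μa = Measure.map g μb := by
  rw [← Measure.map_map hg hf.measurable, hf.map_eq]

theorem map_mul_map_prod {G α β : Type*} [Mul G] [MeasurableSpace G] [MeasurableMul₂ G]
    [MeasurableSpace α] [MeasurableSpace β] {μ : Measure α} {ν : Measure β} [SFinite μ]
    [SFinite ν] {f : α → G} {g : β → G} (hf : Measurable f) (hg : Measurable g) :
    Measure.map (fun p : G × G => p.1 * p.2) ((μ.map f).prod (ν.map g)) =
      Measure.map (fun p : α × β => f p.1 * g p.2) (μ.prod ν) := by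
  rw [Measure.map_prod_map μ ν hf hg, Measure.map_map measurable_mul (hf.prodMap hg)]
  rfl

section Shear

variable {G X : Type*} [Mul G] [MeasurableSpace G] [MeasurableMul₂ G] [MeasurableSpace X]
  (μ : Measure G) [SFinite μ] [μ.IsMulLeftInvariant] (ν : Measure X) [SFinite ν]

theorem measurePreserving_prod_mul_left_snd {w : X → G} (hw : Measurable w) :
    MeasurePreserving (fun q : X × G => (q.1, w q.1 * q.2)) (ν.prod μ) (ν.prod μ) :=
  (MeasurePreserving.id ν).skew_product (by fun_prop)
    (.of_forall fun x => map_mul_left_eq_self μ (w x))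

theorem measurePreserving_prod_mul_left_fst {w : X → G} (hw : Measurable w) :
    MeasurePreserving (fun q : G × X => (w q.2 * q.1, q.2)) (μ.prod ν) (μ.prod ν) :=
  Measure.measurePreserving_swap.comp
    ((measurePreserving_prod_mul_left_snd μ ν hw).comp Measure.measurePreserving_swap)

theorem measurePreserving_mul_left_fst₃ {w : G → G → G}
    (hw : Measurable (Function.uncurry w)) :
    MeasurePreserving (fun p : G × G × G => (w p.2.1 p.2.2 * p.1, p.2))
      (μ.prod (μ.prod μ)) (μ.prod (μ.prod μ)) :=
  measurePreserving_prod_mul_left_fst μ (μ.prod μ) hw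

theorem measurePreserving_mul_left_snd₃ {w : G → G → G}
    (hw : Measurable (Function.uncurry w)) :
    MeasurePreserving (fun p : G × G × G => (p.1, w p.1 p.2.2 * p.2.1, p.2.2))
      (μ.prod (μ.prod μ)) (μ.prod (μ.prod μ)) :=
  (MeasurePreserving.id μ).skew_product (g := fun a (r : G × G) => (w a r.2 * r.1, r.2))
    (by fun_prop)
    (.of_forall fun a => (measurePreserving_prod_mul_left_fst μ μ hw.of_uncurry_left).map_eq)

theorem measurePreserving_mul_left_thd₃ {w : G → G → G}
    (hw : Measurable (Function.uncurry w)) :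
    MeasurePreserving (fun p : G × G × G => (p.1, p.2.1, w p.1 p.2.1 * p.2.2))
      (μ.prod (μ.prod μ)) (μ.prod (μ.prod μ)) :=
  (MeasurePreserving.id μ).skew_product (g := fun a (r : G × G) => (r.1, w a r.1 * r.2))
    (by fun_prop)
    (.of_forall fun a => (measurePreserving_prod_mul_left_snd μ μ hw.of_uncurry_left).map_eq)

end Shear

theorem map_sq_mul_commutator_eq_map_sq_mul_sq_mul_sq {G : Type*} [Group G] [MeasurableSpace G]
    [MeasurableMul₂ G] [MeasurableInv G] (μ : Measure G) [SFinite μ] [μ.IsMulLeftInvariant] :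
    Measure.map (fun p : G × G × G => p.1 * p.1 * (p.2.1 * p.2.2 * p.2.1⁻¹ * p.2.2⁻¹))
        (μ.prod (μ.prod μ)) =
      Measure.map (fun q : (G × G) × G => q.1.1 * q.1.1 * (q.1.2 * q.1.2) * (q.2 * q.2))
        ((μ.prod μ).prod μ) := by
  -- `a ← c b c⁻¹ a`, then `c ← b⁻¹ a⁻² c` with the new `a`, turn `a² [b, c]` into
  -- `a c b c⁻¹ a b`
  have hΦ := (measurePreserving_mul_left_thd₃ μ (w := fun a b => b⁻¹ * a⁻¹ * a⁻¹)
    (by fun_prop)).comp (measurePreserving_mul_left_fst₃ μ (w := fun b c => c * b * c⁻¹)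
    (by fun_prop))
  -- `b ← c⁻¹ a b`, then `c ← a⁻¹ c`, turn `a² c² b²` into the same word
  have hΨ := ((measurePreserving_prodAssoc μ μ μ).symm _).comp
    (((MeasurePreserving.id μ).prod Measure.measurePreserving_swap).comp
    ((measurePreserving_mul_left_thd₃ μ (w := fun a _ => a⁻¹) (by fun_prop)).comp
    (measurePreserving_mul_left_snd₃ μ (w := fun a c => c⁻¹ * a) (by fun_prop))))
  rw [← hΦ.map_comp_eq (by fun_prop), ← hΨ.map_comp_eq (by fun_prop)]
  congr 1
  funext ⟨a, b, c⟩
  simp only [Function.comp_apply, MeasurableEquiv.prodAssoc, MeasurableEquiv.symm_mk,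
    MeasurableEquiv.coe_mk, Equiv.prodAssoc_symm_apply, Prod.map_apply, id_eq, Prod.swap_prod_mk]
  group

end MeasureTheory

theorem square_conv_commutator_eq_cube_general
    {G : Type*} [Group G] [TopologicalSpace G] [IsTopologicalGroup G]
    [SecondCountableTopology G] [MeasurableSpace G] [BorelSpace G]
    (haar : Measure G) [IsProbabilityMeasure haar] [haar.IsMulLeftInvariant]
    (η κ : Measure G)
    (hη : η = Measure.map (fun p : G × G => p.1 * p.2 * p.1⁻¹ * p.2⁻¹) (haar.prod haar))
    (hκ : κ = Measure.map (fun a : G => a * a) haar)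
    (conv : Measure G → Measure G → Measure G)
    (hconv : ∀ a b : Measure G,
      conv a b = Measure.map (fun p : G × G => p.1 * p.2) (a.prod b)) :
    conv κ η = conv (conv κ κ) κ := by
  subst hη hκ
  have hsq : Measurable fun a : G => a * a := by fun_prop
  rw [hconv, hconv, hconv, map_mul_map_prod hsq (by fun_prop), map_mul_map_prod hsq hsq,
    map_mul_map_prod (by fun_prop) hsq]
  exact map_sq_mul_commutator_eq_map_sq_mul_sq_mul_sq haar

/-- Let `G` be a compact group with normalized Haar measure, `η` the commutator measure
(pushforward of Haar × Haar under `(a,b) ↦ a b a⁻¹ b⁻¹`) and `κ` the square measure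
(pushforward of Haar under `a ↦ a²`).  Then `κ * η = κ * κ * κ`, where `*` denotes the
convolution of measures on `G`. -/
theorem square_conv_commutator_eq_cube
    {G : Type*} [Group G] [TopologicalSpace G] [IsTopologicalGroup G] [CompactSpace G]
    [T2Space G] [SecondCountableTopology G] [MeasurableSpace G] [BorelSpace G]
    (haar : Measure G) [IsProbabilityMeasure haar] [haar.IsMulLeftInvariant]
    (η κ : Measure G)
    (hη : η = Measure.map (fun p : G × G => p.1 * p.2 * p.1⁻¹ * p.2⁻¹) (haar.prod haar))
    (hκ : κ = Measure.map (fun a : G => a * a) haar)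
    (conv : Measure G → Measure G → Measure G)
    (hconv : ∀ a b : Measure G,
      conv a b = Measure.map (fun p : G × G => p.1 * p.2) (a.prod b)) :
    conv κ η = conv (conv κ κ) κ :=
  square_conv_commutator_eq_cube_general haar η κ hη hκ conv hconv
end
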